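/- Let P_0, …, P_s be lattice polytopes in ℝ^q whose Cayley sum P = P_0 * ⋯ * P_s ⊂ ℝ^q × ℝ^s is n-dimensional, where n = q + s. For 1 ≤ i ≤ q and 0 ≤ j ≤ s, let ω_{ij} be the width of P_j with respect to the i-th coordinate on ℝ^q, i.e. the difference between the maximum and the minimum of the i-th coordinate over points of P_j. Then Vol(P) ≤ q! · ∏_{i=1}^{q} (ω_{i0} + ω_{i1} + ⋯ + ω_{is}), where Vol(P) is the normalized volume, n! times the Euclidean volume of P. -/

import Mathlib

open scoped BigOperators Pointwise

noncomputable section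

/-- A point of `ℝ^m` with integer coordinates (a lattice point). -/
def IsLatticePoint {m : ℕ} (v : Fin m → ℝ) : Prop := ∀ i, ∃ z : ℤ, v i = (z : ℝ)

/-- `P` is a lattice polytope in `ℝ^m`: the convex hull of a nonempty finite set of
lattice points. -/
def IsLatticePolytope {m : ℕ} (P : Set (Fin m → ℝ)) : Prop :=
  ∃ V : Finset (Fin m → ℝ), V.Nonempty ∧ (∀ v ∈ V, IsLatticePoint v) ∧
    P = convexHull ℝ (V : Set (Fin m → ℝ))

/-- The number of lattice points contained in a subset of `ℝ^m`. -/
def latticePointCount {m : ℕ} (A : Set (Fin m → ℝ)) : ℕ :=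
  Set.ncard {z : Fin m → ℤ | (fun i => (z i : ℝ)) ∈ A}

/-- `h` is the `h^*`-polynomial of the full-dimensional lattice polytope `P ⊆ ℝ^n`:
its coefficients are nonnegative, it has degree at most `n`, and the Ehrhart counting
function of `P` is given by `|mP ∩ ℤ^n| = ∑_i h_i * C(n + m - i, n)`, which is
equivalent to `∑_m |mP ∩ ℤ^n| t^m = h(t)/(1-t)^{n+1}`. -/
def IsHStarPoly {n : ℕ} (P : Set (Fin n → ℝ)) (h : Polynomial ℤ) : Prop :=
  h.natDegree ≤ n ∧ (∀ i, 0 ≤ h.coeff i) ∧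
    ∀ m : ℕ, (latticePointCount ((m : ℝ) • P) : ℤ) =
      ∑ i ∈ Finset.range (n + 1), h.coeff i * ((n + m - i).choose n : ℤ)

/-- The normalized volume of a (full-dimensional) polytope in `ℝ^m`:
`m!` times its Euclidean volume. -/
def normVol {m : ℕ} (P : Set (Fin m → ℝ)) : ℝ :=
  (Nat.factorial m : ℝ) * (MeasureTheory.volume P).toReal

/-- The point of `ℝ^s` over which the `j`-th summand of a Cayley sum sits:
`0` for `j = 0`, and the standard basis vector `e_j` for `j = 1, …, s`. -/
def cayleyVertex (s : ℕ) (j : Fin (s + 1)) : Fin s → ℝ :=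
  fun i => if (i : ℕ) + 1 = (j : ℕ) then 1 else 0

/-- The Cayley sum `P_0 * ⋯ * P_s ⊆ ℝ^q × ℝ^s` of polytopes `P_0, …, P_s ⊆ ℝ^q`:
the convex hull of `(P_0 × {0}) ∪ (P_1 × {e_1}) ∪ ⋯ ∪ (P_s × {e_s})`. -/
def CayleySum {q s : ℕ} (Ps : Fin (s + 1) → Set (Fin q → ℝ)) :
    Set ((Fin q → ℝ) × (Fin s → ℝ)) :=
  convexHull ℝ (⋃ j : Fin (s + 1), (fun p => (p, cayleyVertex s j)) '' Ps j)

/-- A lattice point of `ℝ^q × ℝ^s`. -/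
def IsLatticePointPair {q s : ℕ} (v : (Fin q → ℝ) × (Fin s → ℝ)) : Prop :=
  IsLatticePoint v.1 ∧ IsLatticePoint v.2

/-- An affine isomorphism `ℝ^n ≅ ℝ^q × ℝ^s` is a `ℤ`-affine linear change of coordinates
if it identifies the lattice `ℤ^n` with the lattice `ℤ^q × ℤ^s`. -/
def IsLatticeEquiv {n q s : ℕ} (T : (Fin n → ℝ) ≃ᵃ[ℝ] (Fin q → ℝ) × (Fin s → ℝ)) : Prop :=
  ∀ v : Fin n → ℝ, IsLatticePoint v ↔ IsLatticePointPair (T v)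

/-!
The Cayley sum lies in the region over the simplex `Δ_s` whose fibre over `t` is the box with
sides `∑_j λ_j(t) ω_{ij}`, where `λ(t)` are the barycentric coordinates of `t`; so its volume is
at most `∫_{Δ_s} ∏_i ∑_j λ_j ω_{ij}`. By AM-GM and the power-mean inequality the integrand is at
most `∑_j d_j λ_j^q` with `∑_j d_j = ∏_i ∑_j ω_{ij}`, and `∫_{Δ_s} λ_j^q ≤ q!/(q+s)!`: the
region `{(x, t) | 0 ≤ x_i ≤ λ_j(t)}` is covered by `q!` permuted copies of its part with `x`
sorted, and a volume-preserving shear maps that part into the standard `(q+s)`-simplex. Finally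
`Vol(Δ_n) ≤ 1/n!` because partial sums map `Δ_n` into the sorted unit cube, `n!` almost disjoint
copies of which fill the unit cube.
-/

open MeasureTheory Set
open scoped ENNReal Nat

/-! ### The volume of the corner simplex -/

def cornerSimplex (ι : Type*) [Fintype ι] : Set (ι → ℝ) := {x | 0 ≤ x ∧ ∑ i, x i ≤ 1}

lemma isClosed_cornerSimplex (ι : Type*) [Fintype ι] : IsClosed (cornerSimplex ι) :=
  isClosed_Ici.inter (isClosed_le (continuous_finsetSum _ fun i _ => continuous_apply i)
    continuous_const)

def sortedUnitCube (n : ℕ) : Set (Fin n → ℝ) := {y | y ∈ Icc 0 1 ∧ Monotone y}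

lemma isClosed_sortedUnitCube (n : ℕ) : IsClosed (sortedUnitCube n) :=
  isClosed_Icc.inter isClosed_monotone

lemma Tuple.eq_sort_of_injective {n : ℕ} {α : Type*} [LinearOrder α] {f : Fin n → α}
    {σ : Equiv.Perm (Fin n)} (hf : Function.Injective f) (hσ : Monotone (f ∘ σ)) :
    σ = Tuple.sort f :=
  Tuple.eq_sort_iff.2 ⟨hσ, fun _ _ hij he => absurd (σ.injective (hf he)) hij.ne⟩

lemma measurePreserving_comp_equiv {ι ι' : Type*} [Fintype ι] [Fintype ι'] (e : ι' ≃ ι) :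
    MeasurePreserving (fun y : ι → ℝ => y ∘ e) volume volume := by
  convert volume_measurePreserving_piCongrLeft (fun _ : ι' => ℝ) e.symm using 1
  ext y i
  simp [MeasurableEquiv.piCongrLeft, Equiv.piCongrLeft]

lemma volume_setOf_apply_eq_apply {ι : Type*} [Fintype ι] {i j : ι} (hij : i ≠ j) :
    volume {y : ι → ℝ | y i = y j} = 0 := by
  classical
  let f : (ι → ℝ) →ₗ[ℝ] ℝ := (LinearMap.proj i : (ι → ℝ) →ₗ[ℝ] ℝ) - LinearMap.proj j
  have hker : {y : ι → ℝ | y i = y j} = LinearMap.ker f := by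
    ext y; simp [f, sub_eq_zero]
  rw [hker]
  refine Measure.addHaar_submodule _ _ fun htop => ?_
  have h := (LinearMap.mem_ker (f := f)).1 (htop ▸ Submodule.mem_top : Pi.single i 1 ∈ _)
  simp [f, hij.symm] at h

lemma volume_setOf_not_injective (ι : Type*) [Fintype ι] :
    volume {y : ι → ℝ | ¬ Function.Injective y} = 0 := by
  refine measure_mono_null (t := ⋃ (p : ι × ι) (_ : p.1 ≠ p.2), {y | y p.1 = y p.2}) ?_
    (measure_iUnion_null fun p => measure_iUnion_null fun hp => volume_setOf_apply_eq_apply hp)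
  intro y hy
  simp only [Function.Injective, not_forall] at hy
  obtain ⟨i, j, hyij, hij⟩ := hy
  exact mem_iUnion₂.2 ⟨(i, j), hij, hyij⟩

lemma factorial_mul_volume_sortedUnitCube_le (n : ℕ) :
    (n ! : ℝ≥0∞) * volume (sortedUnitCube n) ≤ 1 := by
  have hO : MeasurableSet (sortedUnitCube n) := (isClosed_sortedUnitCube n).measurableSet
  let piece : Equiv.Perm (Fin n) → Set (Fin n → ℝ) := fun π => (· ∘ π) ⁻¹' sortedUnitCube n
  have hdisj : Pairwise (Function.onFun (AEDisjoint volume) piece) := by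
    refine fun π σ hπσ => measure_mono_null ?_ (volume_setOf_not_injective (Fin n))
    rintro y ⟨hπ, hσ⟩ hinj
    exact hπσ <|
      (Tuple.eq_sort_of_injective hinj hπ.2).trans (Tuple.eq_sort_of_injective hinj hσ.2).symm
  calc (n ! : ℝ≥0∞) * volume (sortedUnitCube n)
      = ∑ π, volume (piece π) := by
        rw [Finset.sum_congr rfl fun π _ =>
          (measurePreserving_comp_equiv π).measure_preimage hO.nullMeasurableSet]
        simp [Fintype.card_perm]
    _ = volume (⋃ π, piece π) := by
        rw [measure_iUnion₀ hdisj fun π => (hO.preimage (by fun_prop)).nullMeasurableSet,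
          tsum_fintype]
    _ ≤ volume (Icc (0 : Fin n → ℝ) 1) := by
        refine measure_mono (iUnion_subset fun π y hy => ?_)
        exact ⟨fun i => by simpa using hy.1.1 (π.symm i), fun i => by simpa using hy.1.2 (π.symm i)⟩
    _ = 1 := by simp [Real.volume_Icc_pi]

lemma measurePreserving_of_det_eq_one {E : Type*} [NormedAddCommGroup E] [NormedSpace ℝ E]
    [MeasurableSpace E] [BorelSpace E] [FiniteDimensional ℝ E] (μ : Measure E)
    [μ.IsAddHaarMeasure] {f : E →ₗ[ℝ] E} (hf : LinearMap.det f = 1) :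
    MeasurePreserving f μ μ :=
  ⟨f.continuous_of_finiteDimensional.measurable, by
    simp [Measure.map_linearMap_addHaar_eq_smul_addHaar μ (f := f) (by simp [hf]), hf]⟩

def partialSums (n : ℕ) : (Fin n → ℝ) →ₗ[ℝ] (Fin n → ℝ) :=
  Matrix.toLin' (Matrix.of fun i j => if j ≤ i then 1 else 0)

lemma partialSums_apply {n : ℕ} (x : Fin n → ℝ) (i : Fin n) :
    partialSums n x i = ∑ j ∈ Finset.Iic i, x j := by
  simp only [partialSums, Matrix.toLin'_apply, Matrix.mulVec, dotProduct, Matrix.of_apply, ite_mul,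
    one_mul, zero_mul]
  rw [← Finset.sum_filter]
  congr 1; ext; simp

lemma det_partialSums (n : ℕ) : LinearMap.det (partialSums n) = 1 := by
  rw [partialSums, LinearMap.det_toLin', Matrix.det_of_isLowerTriangular _ fun i j hij => ?_]
  · simp
  · simp [not_le.2 (show i < j from hij)]

lemma partialSums_succ {n : ℕ} (u : Fin (n + 1) → ℝ) (k : Fin n) :
    partialSums (n + 1) u k.succ = partialSums (n + 1) u k.castSucc + u k.succ := by
  have h : Finset.Iic k.succ = Finset.cons k.succ (Finset.Iic k.castSucc) (by simp) := by
    ext j; simp [Fin.le_castSucc_iff]; omega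
  rw [partialSums_apply, partialSums_apply, h, Finset.sum_cons, add_comm]

lemma nonneg_of_monotone_partialSums {n : ℕ} {u : Fin n → ℝ} (h0 : 0 ≤ partialSums n u)
    (hm : Monotone (partialSums n u)) : 0 ≤ u := by
  cases n with
  | zero => exact fun i => i.elim0
  | succ n =>
    intro i
    cases i using Fin.cases with
    | zero => simpa [partialSums_apply, ← bot_eq_zero, Finset.Iic_bot] using h0 0
    | succ k =>
      have := hm (Fin.castSucc_le_succ k)
      rw [partialSums_succ] at this
      simpa using this

lemma sum_le_of_partialSums_le {n : ℕ} {u : Fin n → ℝ} {c : ℝ} (hc : 0 ≤ c)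
    (h : ∀ i, partialSums n u i ≤ c) : ∑ i, u i ≤ c := by
  cases n with
  | zero => simpa using hc
  | succ n => simpa [partialSums_apply, ← Fin.top_eq_last, Finset.Iic_top] using h (Fin.last n)

def partialSumsEquiv (n : ℕ) : (Fin n → ℝ) ≃ₗ[ℝ] (Fin n → ℝ) :=
  (partialSums n).equivOfDetNeZero (by simp [det_partialSums])

lemma measurePreserving_partialSumsEquiv_symm (n : ℕ) :
    MeasurePreserving (partialSumsEquiv n).symm volume volume :=
  measurePreserving_of_det_eq_one volume (f := (partialSumsEquiv n).symm.toLinearMap) (by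
    rw [LinearEquiv.det_coe_symm]
    simp [partialSumsEquiv, det_partialSums])

lemma mapsTo_partialSums_cornerSimplex (n : ℕ) :
    MapsTo (partialSums n) (cornerSimplex (Fin n)) (sortedUnitCube n) := by
  intro x ⟨hx0, hx1⟩
  have hsum : ∀ {i i' : Fin n}, i ≤ i' → partialSums n x i ≤ partialSums n x i' := fun h => by
    simp only [partialSums_apply]
    exact Finset.sum_le_sum_of_subset_of_nonneg (Finset.Iic_subset_Iic.2 h) fun j _ _ => hx0 j
  refine ⟨⟨fun i => ?_, fun i => ?_⟩, fun i i' h => hsum h⟩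
  · rw [partialSums_apply]; exact Finset.sum_nonneg fun j _ => hx0 j
  · refine le_trans ?_ hx1
    rw [partialSums_apply]
    exact Finset.sum_le_sum_of_subset_of_nonneg (Finset.subset_univ _) fun j _ _ => hx0 j

lemma factorial_mul_volume_cornerSimplex_fin_le (n : ℕ) :
    (n ! : ℝ≥0∞) * volume (cornerSimplex (Fin n)) ≤ 1 := by
  refine le_trans (mul_le_mul_right ?_ _) (factorial_mul_volume_sortedUnitCube_le n)
  calc volume (cornerSimplex (Fin n))
      ≤ volume (partialSums n ⁻¹' sortedUnitCube n) :=
        measure_mono (mapsTo_partialSums_cornerSimplex n).subset_preimage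
    _ = volume (sortedUnitCube n) :=
        (measurePreserving_of_det_eq_one volume (det_partialSums n)).measure_preimage
          (isClosed_sortedUnitCube n).measurableSet.nullMeasurableSet

lemma factorial_mul_volume_cornerSimplex_le (ι : Type*) [Fintype ι] :
    ((Fintype.card ι) ! : ℝ≥0∞) * volume (cornerSimplex ι) ≤ 1 := by
  let e := Fintype.equivFin ι
  have hpre : (· ∘ e.symm) ⁻¹' cornerSimplex (Fin (Fintype.card ι)) = cornerSimplex ι := by
    ext x
    simp only [cornerSimplex, mem_preimage, mem_ofPred_eq, Pi.le_def, Function.comp_apply,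
      Pi.zero_apply, Equiv.sum_comp e.symm x]
    exact and_congr_left' ⟨fun h i => by simpa using h (e i), fun h i => h _⟩
  rw [← hpre, (measurePreserving_comp_equiv e.symm).measure_preimage
    (isClosed_cornerSimplex _).measurableSet.nullMeasurableSet]
  exact factorial_mul_volume_cornerSimplex_fin_le _

/-! ### Cayley sums of boxes -/

def baryCoords (s : ℕ) : (Fin s → ℝ) →ᵃ[ℝ] (Fin (s + 1) → ℝ) where
  toFun t := Fin.cons (1 - ∑ k, t k) t
  linear :=
    { toFun := fun t => Fin.cons (-∑ k, t k) t
      map_add' := fun t t' => by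
        ext j; cases j using Fin.cases <;> simp [Finset.sum_add_distrib]; ring
      map_smul' := fun c t => by
        ext j; cases j using Fin.cases <;> simp [Finset.mul_sum] }
  map_vadd' := fun t v => by
    ext j; cases j using Fin.cases <;> simp [Finset.sum_add_distrib]; ring

lemma baryCoords_apply {s : ℕ} (t : Fin s → ℝ) : baryCoords s t = Fin.cons (1 - ∑ k, t k) t := rfl

lemma cayleyVertex_zero (s : ℕ) : cayleyVertex s 0 = 0 := by
  ext k; simp [cayleyVertex]

lemma cayleyVertex_succ {s : ℕ} (k : Fin s) : cayleyVertex s k.succ = Pi.single k 1 := by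
  ext i; simp [cayleyVertex, Pi.single_apply, Fin.ext_iff]

lemma baryCoords_cayleyVertex {s : ℕ} (j : Fin (s + 1)) :
    baryCoords s (cayleyVertex s j) = Pi.single j 1 := by
  ext j'
  cases j using Fin.cases <;> cases j' using Fin.cases <;>
    simp [baryCoords_apply, cayleyVertex_zero, cayleyVertex_succ, Pi.single_apply]

/-- For `a ≤ b`, the Cayley sum of the boxes `∏ i, [a i j, b i j]`, `j = 0, …, s`: its fibre over
a point of the simplex is the box whose bounds are interpolated by the barycentric coordinates. -/
def cayleyBox {q s : ℕ} (a b : Fin q → Fin (s + 1) → ℝ) : Set ((Fin q → ℝ) × (Fin s → ℝ)) :=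
  {p | 0 ≤ baryCoords s p.2 ∧ ∀ i, p.1 i ∈ Icc (baryCoords s p.2 ⬝ᵥ a i) (baryCoords s p.2 ⬝ᵥ b i)}

lemma isClosed_cayleyBox {q s : ℕ} (a b : Fin q → Fin (s + 1) → ℝ) :
    IsClosed (cayleyBox a b) := by
  have hc : Continuous fun p : (Fin q → ℝ) × (Fin s → ℝ) => baryCoords s p.2 :=
    (baryCoords s).continuous_of_finiteDimensional.comp continuous_snd
  simp only [cayleyBox, ofPred_and, ofPred_forall, mem_Icc]
  exact (isClosed_le continuous_const hc).inter <| isClosed_iInter fun i =>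
    (isClosed_le (by fun_prop) (by fun_prop)).inter (isClosed_le (by fun_prop) (by fun_prop))

lemma convex_cayleyBox {q s : ℕ} (a b : Fin q → Fin (s + 1) → ℝ) : Convex ℝ (cayleyBox a b) := by
  intro p hp p' hp' α β hα hβ hαβ
  have hbary : baryCoords s (α • p + β • p').2 = α • baryCoords s p.2 + β • baryCoords s p'.2 :=
    Convex.combo_affine_apply hαβ
  refine ⟨?_, fun i => ⟨?_, ?_⟩⟩
  · rw [hbary]
    exact add_nonneg (smul_nonneg hα hp.1) (smul_nonneg hβ hp'.1)
  · simp only [hbary, add_dotProduct, smul_dotProduct, smul_eq_mul, Prod.fst_add, Prod.smul_fst,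
      Pi.add_apply, Pi.smul_apply]
    gcongr
    exacts [(hp.2 i).1, (hp'.2 i).1]
  · simp only [hbary, add_dotProduct, smul_dotProduct, smul_eq_mul, Prod.fst_add, Prod.smul_fst,
      Pi.add_apply, Pi.smul_apply]
    gcongr
    exacts [(hp.2 i).2, (hp'.2 i).2]

lemma cayleySum_subset_cayleyBox {q s : ℕ} {Ps : Fin (s + 1) → Set (Fin q → ℝ)}
    {a b : Fin q → Fin (s + 1) → ℝ} (h : ∀ j, ∀ p ∈ Ps j, ∀ i, p i ∈ Icc (a i j) (b i j)) :
    CayleySum Ps ⊆ cayleyBox a b := by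
  refine convexHull_min ?_ (convex_cayleyBox a b)
  simp only [iUnion_subset_iff, image_subset_iff]
  intro j p hp
  simpa [cayleyBox, baryCoords_cayleyVertex, Pi.single_nonneg] using h j p hp

lemma slice_cayleyBox {q s : ℕ} (a b : Fin q → Fin (s + 1) → ℝ) {t : Fin s → ℝ}
    (ht : 0 ≤ baryCoords s t) :
    (·, t) ⁻¹' cayleyBox a b =
      Icc (fun i => baryCoords s t ⬝ᵥ a i) (fun i => baryCoords s t ⬝ᵥ b i) := by
  ext x
  simp only [cayleyBox, mem_preimage, mem_ofPred_eq, mem_Icc, Pi.le_def, forall_and]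
  exact and_iff_right ht

lemma slice_cayleyBox_of_not {q s : ℕ} (a b : Fin q → Fin (s + 1) → ℝ) {t : Fin s → ℝ}
    (ht : ¬ 0 ≤ baryCoords s t) : (·, t) ⁻¹' cayleyBox a b = ∅ := by
  ext x; simp [cayleyBox, ht]

lemma volume_slice_cayleyBox {q s : ℕ} (a b : Fin q → Fin (s + 1) → ℝ) {t : Fin s → ℝ}
    (ht : 0 ≤ baryCoords s t) :
    volume ((·, t) ⁻¹' cayleyBox a b) = ∏ i, ENNReal.ofReal (baryCoords s t ⬝ᵥ (b i - a i)) := by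
  simp [slice_cayleyBox a b ht, Real.volume_Icc_pi, dotProduct_sub]

/-! ### The region under a power of a barycentric coordinate -/

lemma sumPiEquivProdPi_symm_mem_cornerSimplex {q s : ℕ} (j : Fin (s + 1)) {u : Fin q → ℝ}
    {t : Fin s → ℝ} (hu : 0 ≤ u) (ht : 0 ≤ baryCoords s t) (hj : ∑ i, u i ≤ baryCoords s t j) :
    (MeasurableEquiv.sumPiEquivProdPi fun _ : Fin q ⊕ Fin s => ℝ).symm
      (u, t - (∑ i, u i) • cayleyVertex s j) ∈ cornerSimplex (Fin q ⊕ Fin s) := by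
  set c := ∑ i, u i
  suffices h : 0 ≤ t - c • cayleyVertex s j ∧ c + ∑ k, (t - c • cayleyVertex s j) k ≤ 1 from
    ⟨by rintro (i | k); exacts [hu i, h.1 k], by rw [Fintype.sum_sum_type]; exact h.2⟩
  have ht0 : ∑ k, t k ≤ 1 := by simpa [baryCoords_apply] using ht 0
  cases j using Fin.cases with
  | zero =>
    simp only [baryCoords_apply, Fin.cons_zero] at hj
    simp only [cayleyVertex_zero, smul_zero, sub_zero]
    exact ⟨fun k => ht k.succ, by linarith⟩
  | succ k =>
    simp only [baryCoords_apply, Fin.cons_succ] at hj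
    refine ⟨fun k' => ?_, ?_⟩
    · rcases eq_or_ne k' k with rfl | hk
      · simpa [cayleyVertex_succ] using hj
      · simpa [cayleyVertex_succ, hk, baryCoords_apply] using ht k'.succ
    · have : ∑ k', (t - c • cayleyVertex s k.succ) k' = ∑ k', t k' - c := by
        simp [cayleyVertex_succ, Finset.sum_sub_distrib, ← Finset.mul_sum]
      linarith

lemma mem_cayleyBox_single {q s : ℕ} {j : Fin (s + 1)} {p : (Fin q → ℝ) × (Fin s → ℝ)} :
    p ∈ cayleyBox 0 (fun _ => Pi.single j 1) ↔
      0 ≤ baryCoords s p.2 ∧ 0 ≤ p.1 ∧ ∀ i, p.1 i ≤ baryCoords s p.2 j := by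
  simp [cayleyBox, Pi.le_def, forall_and]

lemma volume_cayleyBox_single_inter_monotone_le (q : ℕ) {s : ℕ} (j : Fin (s + 1)) :
    volume (cayleyBox (0 : Fin q → Fin (s + 1) → ℝ) (fun _ => Pi.single j 1) ∩
      {p | Monotone p.1}) ≤
      volume (cornerSimplex (Fin q ⊕ Fin s)) := by
  let D := (partialSumsEquiv q).symm
  let Ψ : (Fin q → ℝ) × (Fin s → ℝ) → (Fin q ⊕ Fin s → ℝ) := fun p =>
    (MeasurableEquiv.sumPiEquivProdPi fun _ => ℝ).symm
      (D p.1, p.2 - (∑ i, D p.1 i) • cayleyVertex s j)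
  have hD : Continuous D := D.toLinearMap.continuous_of_finiteDimensional
  have hΨ : MeasurePreserving Ψ volume volume :=
    (volume_measurePreserving_sumPiEquivProdPi_symm _).comp <|
      (measurePreserving_partialSumsEquiv_symm q).skew_product
        (g := fun x t => t - (∑ i, D x i) • cayleyVertex s j) (Continuous.measurable (by fun_prop))
        (ae_of_all _ fun x => map_sub_right_eq_self volume _)
  refine le_trans (measure_mono fun p hp => ?_) (hΨ.measure_preimage
    (isClosed_cornerSimplex _).measurableSet.nullMeasurableSet).le
  obtain ⟨⟨ht, hx0, hxj⟩, hmono⟩ := And.imp_left mem_cayleyBox_single.1 hp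
  have hu : partialSums q (D p.1) = p.1 := (partialSumsEquiv q).apply_symm_apply p.1
  have hu0 : 0 ≤ D p.1 := nonneg_of_monotone_partialSums (by rwa [hu]) (by rw [hu]; exact hmono)
  have hsum : ∑ i, D p.1 i ≤ baryCoords s p.2 j := sum_le_of_partialSums_le (ht j) (by rwa [hu])
  exact sumPiEquivProdPi_symm_mem_cornerSimplex j hu0 ht hsum

lemma volume_cayleyBox_single_le (q : ℕ) {s : ℕ} (j : Fin (s + 1)) :
    volume (cayleyBox (0 : Fin q → Fin (s + 1) → ℝ) (fun _ => Pi.single j 1)) ≤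
      q ! * volume (cornerSimplex (Fin q ⊕ Fin s)) := by
  set C := cayleyBox (0 : Fin q → Fin (s + 1) → ℝ) (fun _ => Pi.single j 1)
  let permute : Equiv.Perm (Fin q) → (Fin q → ℝ) × (Fin s → ℝ) → (Fin q → ℝ) × (Fin s → ℝ) :=
    fun π p => (p.1 ∘ π, p.2)
  have hmp : ∀ π, MeasurePreserving (permute π) volume volume := fun π =>
    (measurePreserving_comp_equiv π).prod (MeasurePreserving.id volume)
  have hG : MeasurableSet (C ∩ {p | Monotone p.1}) :=
    ((isClosed_cayleyBox _ _).inter (isClosed_monotone.preimage continuous_fst)).measurableSet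
  calc volume C
      ≤ volume (⋃ π, permute π ⁻¹' (C ∩ {p | Monotone p.1})) := by
        refine measure_mono fun p hp => mem_iUnion.2 ⟨Tuple.sort p.1, ?_, Tuple.monotone_sort p.1⟩
        obtain ⟨ht, hx0, hxj⟩ := mem_cayleyBox_single.1 hp
        exact mem_cayleyBox_single.2 ⟨ht, fun i => hx0 (Tuple.sort p.1 i), fun i => hxj _⟩
    _ ≤ ∑ π, volume (permute π ⁻¹' (C ∩ {p | Monotone p.1})) := measure_iUnion_fintype_le _ _
    _ = q ! * volume (C ∩ {p | Monotone p.1}) := by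
        rw [Finset.sum_congr rfl fun π _ => (hmp π).measure_preimage hG.nullMeasurableSet]
        simp [Fintype.card_perm]
    _ ≤ q ! * volume (cornerSimplex (Fin q ⊕ Fin s)) := by
        gcongr; exact volume_cayleyBox_single_inter_monotone_le q j

lemma factorial_mul_volume_cayleyBox_single_le (q : ℕ) {s : ℕ} (j : Fin (s + 1)) :
    ((q + s) ! : ℝ≥0∞) * volume (cayleyBox (0 : Fin q → Fin (s + 1) → ℝ)
      (fun _ => Pi.single j 1)) ≤ q ! := by
  calc ((q + s) ! : ℝ≥0∞) * volume (cayleyBox (0 : Fin q → Fin (s + 1) → ℝ)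
        (fun _ => Pi.single j 1))
      ≤ (q + s) ! * (q ! * volume (cornerSimplex (Fin q ⊕ Fin s))) := by
        gcongr; exact volume_cayleyBox_single_le q j
    _ = q ! * ((Fintype.card (Fin q ⊕ Fin s)) ! * volume (cornerSimplex (Fin q ⊕ Fin s))) := by
        simp only [Fintype.card_sum, Fintype.card_fin]; ring
    _ ≤ q ! := by
        simpa using mul_le_mul_right (factorial_mul_volume_cornerSimplex_le (Fin q ⊕ Fin s)) _

/-! ### An AM-GM bound for products of linear forms -/

lemma prod_le_sum_pow_card_div_card {ι : Type*} [Fintype ι] [Nonempty ι] {z : ι → ℝ}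
    (hz : 0 ≤ z) : ∏ i, z i ≤ (∑ i, z i ^ Fintype.card ι) / Fintype.card ι := by
  have hn : Fintype.card ι ≠ 0 := Fintype.card_ne_zero
  have h := Real.geom_mean_le_arith_mean_weighted Finset.univ (fun _ => (Fintype.card ι : ℝ)⁻¹)
    (fun i => z i ^ Fintype.card ι) (fun _ _ => by positivity) (by simp [hn])
    (fun i _ => pow_nonneg (hz i) _)
  simp only [Real.pow_rpow_inv_natCast (hz _) hn] at h
  simpa [Finset.mul_sum, div_eq_inv_mul] using h

section AMGM

variable {ι κ : Type*} [Fintype ι] [Fintype κ] [DecidableEq ι] {ω : ι → κ → ℝ}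

def amgmCoeff (ω : ι → κ → ℝ) (k : κ) : ℝ :=
  (∑ i, (∏ i' ∈ Finset.univ.erase i, ∑ k', ω i' k') * ω i k) / Fintype.card ι

lemma amgmCoeff_nonneg (hω : 0 ≤ ω) : 0 ≤ amgmCoeff ω := fun k =>
  div_nonneg (Finset.sum_nonneg fun i _ => mul_nonneg (Finset.prod_nonneg fun i' _ =>
    Finset.sum_nonneg fun k' _ => hω i' k') (hω i k)) (Nat.cast_nonneg _)

lemma sum_amgmCoeff [Nonempty ι] (ω : ι → κ → ℝ) :
    ∑ k, amgmCoeff ω k = ∏ i, ∑ k, ω i k := by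
  simp only [amgmCoeff]
  rw [← Finset.sum_div, Finset.sum_comm]
  simp_rw [← Finset.mul_sum, mul_comm _ (∑ k, ω _ k),
    Finset.mul_prod_erase _ (fun i => ∑ k, ω i k) (Finset.mem_univ _)]
  simp

lemma prod_dotProduct_le_sum_amgmCoeff_mul_pow [Nonempty ι] (hω : 0 ≤ ω) {x : κ → ℝ}
    (hx : 0 ≤ x) : ∏ i, x ⬝ᵥ ω i ≤ ∑ k, amgmCoeff ω k * x k ^ Fintype.card ι := by
  set n := Fintype.card ι
  set W : ι → ℝ := fun i => ∑ k, ω i k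
  have hW : 0 ≤ W := fun i => Finset.sum_nonneg fun k _ => hω i k
  by_cases hzero : ∃ i, W i = 0
  · obtain ⟨i, hi⟩ := hzero
    have hωi : ω i = 0 := funext fun k =>
      (Finset.sum_eq_zero_iff_of_nonneg fun k _ => hω i k).1 hi k (Finset.mem_univ k)
    rw [Finset.prod_eq_zero (Finset.mem_univ i) (by simp [hωi])]
    exact Finset.sum_nonneg fun k _ => mul_nonneg (amgmCoeff_nonneg hω k) (pow_nonneg (hx k) n)
  push Not at hzero
  -- each `y i` is a mean of the `x k` with weights `ω i k / W i`
  set y : ι → ℝ := fun i => x ⬝ᵥ ω i / W i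
  have hpowMean : ∀ i, y i ^ n ≤ ∑ k, ω i k / W i * x k ^ n := fun i => by
    have := Real.pow_arith_mean_le_arith_mean_pow Finset.univ (fun k => ω i k / W i) x
      (fun k _ => div_nonneg (hω i k) (hW i)) (by rw [← Finset.sum_div]; exact div_self (hzero i))
      (fun k _ => hx k) n
    simpa [y, dotProduct, Finset.sum_div, mul_div_right_comm, mul_comm] using this
  calc ∏ i, x ⬝ᵥ ω i = (∏ i, W i) * ∏ i, y i := by
        rw [← Finset.prod_mul_distrib]
        exact Finset.prod_congr rfl fun i _ => (mul_div_cancel₀ _ (hzero i)).symm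
    _ ≤ (∏ i, W i) * ((∑ i, y i ^ n) / n) := by
        gcongr
        · exact Finset.prod_nonneg fun i _ => hW i
        · exact prod_le_sum_pow_card_div_card fun i =>
            div_nonneg (Finset.sum_nonneg fun k _ => mul_nonneg (hx k) (hω i k)) (hW i)
    _ ≤ (∏ i, W i) * ((∑ i, ∑ k, ω i k / W i * x k ^ n) / n) := by
        gcongr
        · exact Finset.prod_nonneg fun i _ => hW i
        · exact hpowMean _
    _ = ∑ k, amgmCoeff ω k * x k ^ n := by
        simp only [amgmCoeff]
        rw [Finset.sum_comm, mul_div_assoc', Finset.mul_sum, Finset.sum_div]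
        refine Finset.sum_congr rfl fun k _ => ?_
        rw [Finset.sum_div, Finset.sum_mul, Finset.mul_sum, Finset.sum_div]
        refine Finset.sum_congr rfl fun i _ => ?_
        have hWi : ∑ k, ω i k ≠ 0 := hzero i
        have hn : (Fintype.card ι : ℝ) ≠ 0 := Nat.cast_ne_zero.2 Fintype.card_ne_zero
        simp only [n, W, ← Finset.mul_prod_erase _ (fun i => ∑ k, ω i k) (Finset.mem_univ i)]
        field_simp

end AMGM

/-! ### The volume bound -/

lemma measure_prod_le_sum_mul_of_slice_le {α β κ : Type*} [MeasurableSpace α]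
    [MeasurableSpace β] [Fintype κ] {μ : Measure α} {ν : Measure β} [SFinite μ] [SFinite ν]
    {S : Set (α × β)} {T : κ → Set (α × β)} (hS : MeasurableSet S)
    (hT : ∀ k, MeasurableSet (T k)) (c : κ → ℝ≥0∞)
    (h : ∀ y, μ ((·, y) ⁻¹' S) ≤ ∑ k, c k * μ ((·, y) ⁻¹' T k)) :
    μ.prod ν S ≤ ∑ k, c k * μ.prod ν (T k) := by
  simp_rw [Measure.prod_apply_symm hS, Measure.prod_apply_symm (hT _)]
  calc ∫⁻ y, μ ((·, y) ⁻¹' S) ∂ν ≤ ∫⁻ y, ∑ k, c k * μ ((·, y) ⁻¹' T k) ∂ν := lintegral_mono h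
    _ = ∑ k, c k * ∫⁻ y, μ ((·, y) ⁻¹' T k) ∂ν := by
        rw [lintegral_finsetSum _ fun k _ => (measurable_measure_prodMk_right (hT k)).const_mul _]
        simp_rw [lintegral_const_mul _ (measurable_measure_prodMk_right (hT _))]

lemma volume_cayleyBox_le_sum {q s : ℕ} [Nonempty (Fin q)] (a b : Fin q → Fin (s + 1) → ℝ)
    (hab : a ≤ b) :
    volume (cayleyBox a b) ≤ ∑ j, ENNReal.ofReal (amgmCoeff (b - a) j) *
      volume (cayleyBox (0 : Fin q → Fin (s + 1) → ℝ) (fun _ => Pi.single j 1)) := by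
  have hω : 0 ≤ b - a := sub_nonneg.2 hab
  refine measure_prod_le_sum_mul_of_slice_le (isClosed_cayleyBox a b).measurableSet
    (fun j => (isClosed_cayleyBox _ _).measurableSet) _ fun t => ?_
  by_cases ht : 0 ≤ baryCoords s t
  · calc volume ((·, t) ⁻¹' cayleyBox a b)
        = ENNReal.ofReal (∏ i, baryCoords s t ⬝ᵥ (b - a) i) := by
          rw [volume_slice_cayleyBox _ _ ht]
          exact (ENNReal.ofReal_prod_of_nonneg fun i _ =>
            dotProduct_nonneg_of_nonneg ht (hω i)).symm
      _ ≤ ENNReal.ofReal (∑ j, amgmCoeff (b - a) j * baryCoords s t j ^ q) := by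
          simpa using ENNReal.ofReal_le_ofReal (prod_dotProduct_le_sum_amgmCoeff_mul_pow hω ht)
      _ = _ := by
          rw [ENNReal.ofReal_sum_of_nonneg fun j _ =>
            mul_nonneg (amgmCoeff_nonneg hω j) (pow_nonneg (ht j) q)]
          simp [volume_slice_cayleyBox _ _ ht, ENNReal.ofReal_mul (amgmCoeff_nonneg hω _),
            ENNReal.ofReal_pow (ht _)]
  · simp [slice_cayleyBox_of_not _ _ ht]

theorem factorial_mul_volume_cayleyBox_le {q s : ℕ} (a b : Fin q → Fin (s + 1) → ℝ)
    (hab : a ≤ b) :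
    ((q + s) ! : ℝ≥0∞) * volume (cayleyBox a b) ≤
      q ! * ENNReal.ofReal (∏ i, ∑ j, (b i j - a i j)) := by
  rcases isEmpty_or_nonempty (Fin q) with hq | hq
  · have : cayleyBox a b = cayleyBox (0 : Fin q → Fin (s + 1) → ℝ) (fun _ => Pi.single 0 1) := by
      ext p; simp [cayleyBox]
    simpa [this] using factorial_mul_volume_cayleyBox_single_le q (0 : Fin (s + 1))
  have hd0 := amgmCoeff_nonneg (sub_nonneg.2 hab)
  calc ((q + s) ! : ℝ≥0∞) * volume (cayleyBox a b)
      ≤ (q + s) ! * ∑ j, ENNReal.ofReal (amgmCoeff (b - a) j) *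
          volume (cayleyBox (0 : Fin q → Fin (s + 1) → ℝ) (fun _ => Pi.single j 1)) := by
        gcongr; exact volume_cayleyBox_le_sum a b hab
    _ = ∑ j, ENNReal.ofReal (amgmCoeff (b - a) j) * ((q + s) ! *
          volume (cayleyBox (0 : Fin q → Fin (s + 1) → ℝ) (fun _ => Pi.single j 1))) := by
        rw [Finset.mul_sum]
        exact Finset.sum_congr rfl fun j _ => mul_left_comm _ _ _
    _ ≤ ∑ j, ENNReal.ofReal (amgmCoeff (b - a) j) * q ! := by
        gcongr with j; exact factorial_mul_volume_cayleyBox_single_le q j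
    _ = q ! * ENNReal.ofReal (∏ i, ∑ j, (b i j - a i j)) := by
        rw [← Finset.sum_mul, ← ENNReal.ofReal_sum_of_nonneg fun j _ => hd0 j, sum_amgmCoeff,
          mul_comm]
        rfl

lemma IsLatticePolytope.isCompact {m : ℕ} {P : Set (Fin m → ℝ)} (hP : IsLatticePolytope P) :
    IsCompact P := by
  obtain ⟨V, -, -, rfl⟩ := hP
  exact V.finite_toSet.isCompact_convexHull (𝕜 := ℝ)

lemma IsLatticePolytope.nonempty {m : ℕ} {P : Set (Fin m → ℝ)} (hP : IsLatticePolytope P) :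
    P.Nonempty := by
  obtain ⟨V, hV, -, rfl⟩ := hP
  exact (Finset.coe_nonempty.2 hV).convexHull

theorem statement18_general (q s : ℕ) (Ps : Fin (s + 1) → Set (Fin q → ℝ))
    (hPs : ∀ j, IsLatticePolytope (Ps j)) :
    ((q + s).factorial : ℝ) * (MeasureTheory.volume (CayleySum Ps)).toReal ≤
      (q.factorial : ℝ) *
        ∏ i : Fin q, ∑ j : Fin (s + 1),
          (sSup ((fun p => p i) '' Ps j) - sInf ((fun p => p i) '' Ps j)) := by
  have hbd : ∀ j, ∀ p ∈ Ps j, ∀ i, p i ∈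
      Icc (sInf ((fun p => p i) '' Ps j)) (sSup ((fun p => p i) '' Ps j)) := fun j p hp i =>
    have hK := (hPs j).isCompact.image (continuous_apply i)
    ⟨csInf_le hK.bddBelow (mem_image_of_mem _ hp), le_csSup hK.bddAbove (mem_image_of_mem _ hp)⟩
  have hab : (fun i j => sInf ((fun p : Fin q → ℝ => p i) '' Ps j)) ≤
      fun i j => sSup ((fun p : Fin q → ℝ => p i) '' Ps j) := fun i j => by
    obtain ⟨p, hp⟩ := (hPs j).nonempty
    exact (hbd j p hp i).1.trans (hbd j p hp i).2
  have hW : 0 ≤ ∏ i : Fin q, ∑ j : Fin (s + 1),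
      (sSup ((fun p => p i) '' Ps j) - sInf ((fun p => p i) '' Ps j)) :=
    Finset.prod_nonneg fun i _ => Finset.sum_nonneg fun j _ => sub_nonneg.2 (hab i j)
  have h := (mul_le_mul_right (measure_mono (cayleySum_subset_cayleyBox hbd)) _).trans
    (factorial_mul_volume_cayleyBox_le _ _ hab)
  have := ENNReal.toReal_mono (by finiteness) h
  rwa [ENNReal.toReal_mul, ENNReal.toReal_mul, ENNReal.toReal_ofReal hW, ENNReal.toReal_natCast,
    ENNReal.toReal_natCast] at this

/-- (From the proof of Theorem 4.1.) Let `P = P_0 * ⋯ * P_s` be an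
`n`-dimensional Cayley sum of lattice polytopes in `ℝ^q`, with `n = q + s`, and let
`ω_{ij}` be the width of `P_j` in the `i`-th coordinate direction of `ℝ^q`.  Then
`Vol(P) ≤ q! · ∏_{i=1}^q (ω_{i0} + ⋯ + ω_{is})`, where `Vol(P)` is `n!` times the
Euclidean volume of `P`. -/
theorem statement18 (q s : ℕ) (Ps : Fin (s + 1) → Set (Fin q → ℝ))
    (hPs : ∀ j, IsLatticePolytope (Ps j))
    (hfull : affineSpan ℝ (CayleySum Ps) = ⊤) :
    ((q + s).factorial : ℝ) * (MeasureTheory.volume (CayleySum Ps)).toReal ≤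
      (q.factorial : ℝ) *
        ∏ i : Fin q, ∑ j : Fin (s + 1),
          (sSup ((fun p => p i) '' Ps j) - sInf ((fun p => p i) '' Ps j)) :=
  statement18_general q s Ps hPs

end
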